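/- arXiv:2012.13509 — 2 statements merged into one kernel-verified Lean document; each statement's English description precedes it below -/
import Mathlib

section
/- Let n ≥ 1 and C' ∈ (0,1), and let W : (1,∞) → ℝ be differentiable with W(r) ∉ [0,1] for all r > 1, satisfying r·W'(r)·(C'·W(r)^(n-1) − (W(r)−1)^(n-1)) + (C'·W(r)^n − (W(r)−1)^n) = 0 for all r > 1. Then there exists a constant c ∈ ℝ such that C'·W(r)^n − (W(r)−1)^n = c·r^(-n) for all r > 1. -/
/-!
With `G r = C' * W r ^ n - (W r - 1) ^ n`, the chain rule gives
`G' = n * W' * (C' * W ^ (n - 1) - (W - 1) ^ (n - 1))`, so `n` times the ODE is the Euler equation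
`r * G' + n * G = 0`, which makes `r ^ n * G r` constant on the connected set `r > 1`.
-/

open Set

theorem exists_eq_mul_zpow_neg_of_mul_deriv_add_mul_eq_zero {s : Set ℝ} (hs : IsOpen s)
    (hs' : IsPreconnected s) (hs₀ : (0 : ℝ) ∉ s) (n : ℤ) {g g' : ℝ → ℝ}
    (hg : ∀ r ∈ s, HasDerivAt g (g' r) r) (hode : ∀ r ∈ s, r * g' r + n * g r = 0) :
    ∃ c, ∀ r ∈ s, g r = c * r ^ (-n) := by
  have hne : ∀ r ∈ s, r ≠ 0 := fun r hr h => hs₀ (h ▸ hr)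
  -- `r ↦ r ^ n * g r` is a first integral: `r * (r ^ n * g r)' = r ^ n * (r * g' r + n * g r)`.
  have hF : ∀ r ∈ s, HasDerivAt (fun r => r ^ n * g r) 0 r := by
    intro r hr
    have hr₀ := hne r hr
    refine ((hasDerivAt_zpow n r (.inl hr₀)).mul (hg r hr)).congr_deriv ?_
    rw [zpow_sub_one₀ hr₀]
    field_simp
    linear_combination r ^ n * hode r hr
  obtain ⟨c, hc⟩ := hs.exists_is_const_of_deriv_eq_zero hs'
    (fun r hr => (hF r hr).differentiableAt.differentiableWithinAt)
    (fun r hr => (hF r hr).deriv)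
  refine ⟨c, fun r hr => ?_⟩
  rw [← hc r hr, zpow_neg, mul_right_comm, mul_inv_cancel₀ (zpow_ne_zero n (hne r hr)), one_mul]

theorem ode_first_integral_tau_small_general (n : ℕ) (C' : ℝ)
    (W W' : ℝ → ℝ)
    (hderiv : ∀ r : ℝ, 1 < r → HasDerivAt W (W' r) r)
    (heq : ∀ r : ℝ, 1 < r →
      r * W' r * (C' * (W r) ^ (n - 1) - (W r - 1) ^ (n - 1))
        + (C' * (W r) ^ n - (W r - 1) ^ n) = 0) :
    ∃ c : ℝ, ∀ r : ℝ, 1 < r →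
      C' * (W r) ^ n - (W r - 1) ^ n = c * r ^ (-(n : ℤ)) := by
  have hG : ∀ r ∈ Ioi (1 : ℝ), HasDerivAt (fun r => C' * W r ^ n - (W r - 1) ^ n)
      (n * W' r * (C' * W r ^ (n - 1) - (W r - 1) ^ (n - 1))) r := by
    intro r hr
    have hW := hderiv r hr
    refine ((hW.fun_pow n).const_mul C' |>.sub ((hW.sub_const 1).fun_pow n)).congr_deriv ?_
    ring
  exact exists_eq_mul_zpow_neg_of_mul_deriv_add_mul_eq_zero isOpen_Ioi isPreconnected_Ioi
    (by simp) n hG fun r hr => by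
      push_cast
      linear_combination (n : ℝ) * heq r hr

/-- first integral for the ODE arising in the case `τ ∈ (0, π/4)`. -/
theorem ode_first_integral_tau_small (n : ℕ) (hn : 1 ≤ n) (C' : ℝ)
    (hC' : C' ∈ Set.Ioo (0 : ℝ) 1)
    (W W' : ℝ → ℝ)
    (hrange : ∀ r : ℝ, 1 < r → W r < 0 ∨ 1 < W r)
    (hderiv : ∀ r : ℝ, 1 < r → HasDerivAt W (W' r) r)
    (heq : ∀ r : ℝ, 1 < r →
      r * W' r * (C' * (W r) ^ (n - 1) - (W r - 1) ^ (n - 1))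
        + (C' * (W r) ^ n - (W r - 1) ^ n) = 0) :
    ∃ c : ℝ, ∀ r : ℝ, 1 < r →
      C' * (W r) ^ n - (W r - 1) ^ n = c * r ^ (-(n : ℤ)) :=
  ode_first_integral_tau_small_general n C' W W' hderiv heq
end

section
/- Let n ≥ 2, C₀ ∈ ℝ, and let W : (1,∞) → ℝ be differentiable and satisfy arctan(W(r) + r·W'(r)) + (n−1)·arctan(W(r)) = C₀ for all r > 1. Define Θ(w) := C₀ − (n−1)·arctan(w), and assume Θ(W(r)) ∈ (−π/2, π/2) for all r > 1. Then there exists c ∈ ℝ such that (W(r)² + 1)^((n−1)/2) · (W(r)·cos(Θ(W(r))) − sin(Θ(W(r)))) = c·r^(−n) for all r > 1. -/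
/-!
With `Θ(w) = C₀ - (n - 1) arctan w`, the function `Φ(w) = (w² + 1)^((n-1)/2) (w cos Θ(w) - sin Θ(w))`
satisfies `Φ'(w) = n (w² + 1)^((n-1)/2) cos Θ(w)`. The ODE says `Θ(W) = arctan (W + r W')`, so
`sin Θ(W) = (W + r W') cos Θ(W)` and hence `Φ(W) = -r W' (W² + 1)^((n-1)/2) cos Θ(W)`, i.e.
`r (Φ ∘ W)' = -n (Φ ∘ W)`. Therefore `r ↦ rⁿ Φ(W r)` has zero derivative on `(1, ∞)` and is constant.
-/

open Real Set

theorem sin_arctan_eq_mul_cos_arctan (x : ℝ) : sin (arctan x) = x * cos (arctan x) := by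
  rw [sin_arctan, cos_arctan, mul_one_div]

noncomputable def firstIntegral (m C₀ w : ℝ) : ℝ :=
  (w ^ 2 + 1) ^ ((m - 1) / 2) *
    (w * cos (C₀ - (m - 1) * arctan w) - sin (C₀ - (m - 1) * arctan w))

theorem hasDerivAt_firstIntegral (m C₀ w : ℝ) :
    HasDerivAt (firstIntegral m C₀)
      (m * (w ^ 2 + 1) ^ ((m - 1) / 2) * cos (C₀ - (m - 1) * arctan w)) w := by
  have hpos : w ^ 2 + 1 ≠ 0 := by positivity
  have hθ : HasDerivAt (fun v => C₀ - (m - 1) * arctan v) (-((m - 1) * (1 / (1 + w ^ 2)))) w :=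
    ((hasDerivAt_arctan w).const_mul (m - 1)).const_sub C₀
  have hA : HasDerivAt (fun v => (v ^ 2 + 1) ^ ((m - 1) / 2))
      (2 * w * ((m - 1) / 2) * (w ^ 2 + 1) ^ ((m - 1) / 2 - 1)) w := by
    have := ((hasDerivAt_pow 2 w).add_const 1).rpow_const (p := (m - 1) / 2) (Or.inl hpos)
    convert this using 1; push_cast; ring
  refine (hA.mul (((hasDerivAt_id w).mul hθ.cos).sub hθ.sin)).congr_deriv ?_
  simp only [Pi.mul_apply, Pi.sub_apply, id]
  rw [rpow_sub_one hpos]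
  field_simp
  ring

theorem hasDerivAt_pow_mul_eq_zero (n : ℕ) {φ : ℝ → ℝ} {φ' r : ℝ} (hr : r ≠ 0)
    (hφ : HasDerivAt φ φ' r) (heuler : r * φ' = -n * φ r) :
    HasDerivAt (fun s => s ^ n * φ s) 0 r := by
  refine ((hasDerivAt_pow n r).mul hφ).congr_deriv ?_
  rcases n with _ | n
  · simpa [hr] using heuler
  · have : r ^ (n + 1) * φ' = - (n + 1 : ℕ) * r ^ n * φ r := by
      rw [pow_succ, mul_assoc, heuler]; ring
    rw [this]; push_cast; ring

theorem firstIntegral_euler_identity {m C₀ w v r : ℝ}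
    (hphase : arctan (w + r * v) + (m - 1) * arctan w = C₀) :
    r * (m * (w ^ 2 + 1) ^ ((m - 1) / 2) * cos (C₀ - (m - 1) * arctan w) * v) =
      -m * firstIntegral m C₀ w := by
  have hθ : C₀ - (m - 1) * arctan w = arctan (w + r * v) := by linarith
  rw [firstIntegral, hθ, sin_arctan_eq_mul_cos_arctan]
  ring

theorem ode_first_integral_SPL_general (n : ℕ) (C₀ : ℝ)
    (W W' : ℝ → ℝ)
    (hderiv : ∀ r : ℝ, 1 < r → HasDerivAt W (W' r) r)
    (heq : ∀ r : ℝ, 1 < r →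
      Real.arctan (W r + r * W' r) + (n - 1 : ℝ) * Real.arctan (W r) = C₀)
    (Θ : ℝ → ℝ) (hΘ : Θ = fun w : ℝ => C₀ - (n - 1 : ℝ) * Real.arctan w) :
    ∃ c : ℝ, ∀ r : ℝ, 1 < r →
      ((W r) ^ 2 + 1) ^ (((n : ℝ) - 1) / 2) *
        (W r * Real.cos (Θ (W r)) - Real.sin (Θ (W r))) = c * r ^ (-(n : ℤ)) := by
  subst hΘ
  set G : ℝ → ℝ := fun r => r ^ n * firstIntegral n C₀ (W r)
  have hG : ∀ r ∈ Ioi (1 : ℝ), HasDerivAt G 0 r := fun r hr =>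
    hasDerivAt_pow_mul_eq_zero n ((one_pos.trans hr).ne')
      ((hasDerivAt_firstIntegral _ _ _).comp r (hderiv r hr))
      (firstIntegral_euler_identity (heq r hr))
  obtain ⟨c, hc⟩ := isOpen_Ioi.exists_is_const_of_deriv_eq_zero isPreconnected_Ioi
    (fun r hr => (hG r hr).differentiableAt.differentiableWithinAt)
    (fun r hr => (hG r hr).deriv)
  refine ⟨c, fun r hr => ?_⟩
  rw [← hc r hr, zpow_neg, zpow_natCast,
    eq_mul_inv_iff_mul_eq₀ (pow_ne_zero n (one_pos.trans hr).ne'), mul_comm]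
  rfl

/-- first integral for the special Lagrangian radial ODE. -/
theorem ode_first_integral_SPL (n : ℕ) (hn : 2 ≤ n) (C₀ : ℝ)
    (W W' : ℝ → ℝ)
    (hderiv : ∀ r : ℝ, 1 < r → HasDerivAt W (W' r) r)
    (heq : ∀ r : ℝ, 1 < r →
      Real.arctan (W r + r * W' r) + (n - 1 : ℝ) * Real.arctan (W r) = C₀)
    (Θ : ℝ → ℝ) (hΘ : Θ = fun w : ℝ => C₀ - (n - 1 : ℝ) * Real.arctan w)
    (hrange : ∀ r : ℝ, 1 < r → Θ (W r) ∈ Set.Ioo (-(Real.pi / 2)) (Real.pi / 2)) :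
    ∃ c : ℝ, ∀ r : ℝ, 1 < r →
      ((W r) ^ 2 + 1) ^ (((n : ℝ) - 1) / 2) *
        (W r * Real.cos (Θ (W r)) - Real.sin (Θ (W r))) = c * r ^ (-(n : ℤ)) :=
  ode_first_integral_SPL_general n C₀ W W' hderiv heq Θ hΘ
end
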